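/- For ε = 0 and a holomorphic function F meromorphic at 0 in one variable, the composition F(w(u)), where w(u) = (1/u)(a + g(1/u, (log u)/u)) with a ≠ 0 and g holomorphic near (0,0) with g(0,0)=0, admits an expansion F(w(u)) = Σ_{k ≥ −k₀} (1/u)^k·q_k(log u) on a left half-plane {Re u < −L}, where each q_k is a polynomial; in particular, for any A > 0, F(w(u)) agrees with a finite element of ℂ[u, 1/u, log u] up to an error O(|u|^(−A)). -/

import Mathlib

/-!
Put `y(u) = (1/u, log u / u)`. Near `0` we have `F(z) = G(z) / z^k₀`, so for `|u|` large
`F(w(u)) = u^k₀ H(y(u))` with `H(q) = G(q₁ (a + g q)) / (a + g q)^k₀`, which is analytic at `0`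
because `a + g 0 = a ≠ 0`. Since `|log u| = O(|u|^{1/2})`, `y(u) = O(|u|^{-1/2})`, so replacing
`H` by its Taylor polynomial of degree `N` costs `O(|u|^{k₀ - N/2})`; and `u^k₀` times a monomial
in `1/u` and `log u / u` lies in `ℂ[u, 1/u, log u]`. All estimates only need `|u|` large, and the
half-plane `Re u < -L` lies in `|u| > L`.
-/

/-- A branch of the logarithm, holomorphic on the left half-plane. -/
noncomputable def branchLog (u : ℂ) : ℂ := Complex.log (-u) + Real.pi * Complex.I

/-- The space `𝒫 = ℂ[u, 1/u, log u]`: the span of `u^l (log u)^m`, `l ∈ ℤ`, `m ∈ ℕ`. -/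
noncomputable def Pspace : Submodule ℂ (ℂ → ℂ) :=
  Submodule.span ℂ {f : ℂ → ℂ | ∃ (l : ℤ) (m : ℕ), f = fun u => u ^ l * branchLog u ^ m}

open Filter Topology Asymptotics Bornology Finset Real

theorem MultilinearMap.apply_const_prod {R M ι : Type*} [CommSemiring R] [AddCommMonoid M]
    [Module R M] [Fintype ι] [DecidableEq ι] (f : MultilinearMap R (fun _ : ι => R × R) M)
    (x y : R) :
    f (fun _ => (x, y)) = ∑ s : Finset ι,
      (x ^ #s * y ^ #sᶜ) • f (s.piecewise (fun _ => (1, 0)) (fun _ => (0, 1))) := by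
  have hsplit : (fun _ : ι => (x, y)) = (fun _ => x • (1, 0)) + fun _ => y • (0, 1) := by
    ext <;> simp
  rw [hsplit, f.map_add_univ]
  refine sum_congr rfl fun s _ => ?_
  have hpiece : s.piecewise (fun _ => x • ((1 : R), (0 : R))) (fun _ => y • (0, 1)) =
      fun i => s.piecewise (fun _ => x) (fun _ => y) i •
        s.piecewise (fun _ => ((1 : R), (0 : R))) (fun _ => (0, 1)) i := by
    ext i <;> by_cases hi : i ∈ s <;> simp [hi]
  rw [hpiece, f.map_smul_univ, prod_piecewise, univ_inter, prod_const, prod_const,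
    ← compl_eq_univ_sdiff]

theorem exists_mem_Pspace_eq_pow_mul_partialSum (ps : FormalMultilinearSeries ℂ (ℂ × ℂ) ℂ)
    (k₀ N : ℕ) :
    ∃ p ∈ Pspace, ∀ u ≠ 0, p u = u ^ k₀ * ps.partialSum N (1 / u, branchLog u / u) := by
  refine ⟨∑ k ∈ range N, ∑ s : Finset (Fin k),
      ps k (s.piecewise (fun _ => (1, 0)) (fun _ => (0, 1))) •
        fun u => u ^ ((k₀ : ℤ) - k) * branchLog u ^ #sᶜ,
    Submodule.sum_mem _ fun k _ => Submodule.sum_mem _ fun s _ =>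
      Submodule.smul_mem _ _ (Submodule.subset_span ⟨_, _, rfl⟩), fun u hu => ?_⟩
  simp only [FormalMultilinearSeries.partialSum, mul_sum, Finset.sum_apply, Pi.smul_apply]
  refine sum_congr rfl fun k _ => ?_
  rw [← ContinuousMultilinearMap.coe_coe, MultilinearMap.apply_const_prod, mul_sum]
  refine sum_congr rfl fun s _ => ?_
  have hk : (k : ℤ) = #s + #sᶜ := by rw [← Nat.cast_add, card_add_card_compl, Fintype.card_fin]
  rw [hk, zpow_sub₀ hu, zpow_add₀ hu, zpow_natCast, zpow_natCast, zpow_natCast, smul_eq_mul,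
    smul_eq_mul, div_pow, div_pow, one_pow]
  field_simp

theorem norm_branchLog_le (u : ℂ) : ‖branchLog u‖ ≤ |Real.log ‖u‖| + 2 * π := by
  have hlog : ‖Complex.log (-u)‖ ≤ |Real.log ‖u‖| + π := by
    refine (norm_add_le _ _).trans ?_
    simpa using Complex.abs_arg_le_pi (-u)
  have hπ : ‖(π : ℂ) * Complex.I‖ = π := by simp [abs_of_pos pi_pos]
  unfold branchLog
  linarith [norm_add_le (Complex.log (-u)) (π * Complex.I)]

theorem norm_branchLog_le_sqrt {u : ℂ} (hu : 1 ≤ ‖u‖) : ‖branchLog u‖ ≤ 10 * √‖u‖ := by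
  have hlog : Real.log ‖u‖ ≤ 2 * √‖u‖ := by
    have := Real.log_le_rpow_div (norm_nonneg u) one_half_pos
    rw [← sqrt_eq_rpow] at this
    linarith
  have hsqrt : 1 ≤ √‖u‖ := one_le_sqrt.2 hu
  have hbranch := norm_branchLog_le u
  rw [abs_of_nonneg (Real.log_nonneg hu)] at hbranch
  linarith [pi_le_four]

theorem norm_logCoords_le {u : ℂ} (hu : 1 ≤ ‖u‖) :
    ‖((1 : ℂ) / u, branchLog u / u)‖ ≤ 10 * (√‖u‖)⁻¹ := by
  have hsqrt : 1 ≤ √‖u‖ := one_le_sqrt.2 hu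
  have hu' : ‖u‖ = √‖u‖ * √‖u‖ := (mul_self_sqrt (norm_nonneg u)).symm
  refine max_le ?_ ?_
  · rw [norm_div, norm_one, one_div]
    calc ‖u‖⁻¹ ≤ (√‖u‖)⁻¹ := inv_anti₀ (by positivity) (by nlinarith)
      _ ≤ 10 * (√‖u‖)⁻¹ := by linarith [inv_pos.2 (zero_lt_one.trans_le hsqrt)]
  · rw [norm_div, div_le_iff₀ (by positivity)]
    calc ‖branchLog u‖ ≤ 10 * √‖u‖ := norm_branchLog_le_sqrt hu
      _ = 10 * (√‖u‖)⁻¹ * (√‖u‖ * √‖u‖) := by field_simp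
      _ = 10 * (√‖u‖)⁻¹ * ‖u‖ := by rw [← hu']

theorem logCoords_isBigO :
    (fun u : ℂ => ((1 : ℂ) / u, branchLog u / u)) =O[cobounded ℂ] fun u => (√‖u‖)⁻¹ :=
  IsBigO.of_bound 10 <| (eventually_cobounded_le_norm 1).mono fun u hu => by
    rw [Real.norm_of_nonneg (by positivity)]
    exact norm_logCoords_le hu

theorem tendsto_logCoords_cobounded :
    Tendsto (fun u : ℂ => ((1 : ℂ) / u, branchLog u / u)) (cobounded ℂ) (𝓝 0) :=
  logCoords_isBigO.trans_tendsto <|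
    tendsto_inv_atTop_zero.comp (tendsto_sqrt_atTop.comp tendsto_norm_cobounded_atTop)

theorem pow_mul_inv_sqrt_pow_le {t A : ℝ} (ht : 1 ≤ t) {k c : ℕ} (hA : A ≤ c) :
    t ^ k * (√t)⁻¹ ^ (2 * (k + c)) ≤ t ^ (-A) := by
  have ht0 : t ≠ 0 := by positivity
  calc t ^ k * (√t)⁻¹ ^ (2 * (k + c)) = t ^ (-(c : ℝ)) := by
        rw [pow_mul, inv_pow, sq_sqrt (by positivity), Real.rpow_neg (by positivity),
          Real.rpow_natCast, inv_pow, pow_add]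
        field_simp
    _ ≤ t ^ (-A) := Real.rpow_le_rpow_of_exponent_le ht (neg_le_neg hA)

theorem isBigO_pow_mul_inv_sqrt_pow (k : ℕ) (A : ℝ) :
    (fun u : ℂ => ‖u‖ ^ k * (√‖u‖)⁻¹ ^ (2 * (k + ⌈A⌉₊))) =O[cobounded ℂ]
      fun u => ‖u‖ ^ (-A) :=
  IsBigO.of_bound' <| (eventually_cobounded_le_norm 1).mono fun u hu => by
    rw [norm_of_nonneg (by positivity), norm_of_nonneg (by positivity)]
    exact pow_mul_inv_sqrt_pow_le hu (Nat.le_ceil A)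

theorem exists_forall_re_lt_of_eventually_cobounded {P : ℂ → Prop}
    (h : ∀ᶠ u in cobounded ℂ, P u) : ∃ L : ℝ, 0 < L ∧ ∀ u : ℂ, u.re < -L → P u := by
  obtain ⟨R, -, hR⟩ := hasBasis_cobounded_norm.eventually_iff.1 h
  refine ⟨max R 1, by positivity, fun u hu => hR ?_⟩
  show R ≤ ‖u‖
  linarith [le_max_left R 1, neg_le_abs u.re, Complex.abs_re_le_norm u]

theorem HasFPowerSeriesAt.isBigO_comp_sub_partialSum_pow {α 𝕜 E F : Type*}
    [NontriviallyNormedField 𝕜] [NormedAddCommGroup E] [NormedSpace 𝕜 E]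
    [NormedAddCommGroup F] [NormedSpace 𝕜 F] {f : E → F} {p : FormalMultilinearSeries 𝕜 E F}
    (hf : HasFPowerSeriesAt f p 0) {l : Filter α} {y : α → E} (hy : Tendsto y l (𝓝 0))
    (n : ℕ) :
    (fun x => f (y x) - p.partialSum n (y x)) =O[l] fun x => ‖y x‖ ^ n := by
  have h := hf.isBigO_sub_partialSum_pow n
  simp only [zero_add] at h
  exact h.comp_tendsto hy

theorem analyticAt_comp_fst_mul_div_pow {𝕜 E : Type*} [NontriviallyNormedField 𝕜]
    [NormedAddCommGroup E] [NormedSpace 𝕜 E] {G : 𝕜 → 𝕜} {h : 𝕜 × E → 𝕜}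
    (hG : AnalyticAt 𝕜 G 0) (hh : AnalyticAt 𝕜 h 0) (h0 : h 0 ≠ 0) (k : ℕ) :
    AnalyticAt 𝕜 (fun q => G (q.1 * h q) / h q ^ k) 0 := by
  have hnum : AnalyticAt 𝕜 (fun q : 𝕜 × E => G (q.1 * h q)) 0 :=
    hG.comp_of_eq (analyticAt_fst.mul hh) (by simp)
  exact hnum.div (hh.pow k) (pow_ne_zero k h0)

theorem eventually_comp_eq_pow_mul {l : Filter ℂ} {F G : ℂ → ℂ} {k₀ : ℕ}
    (hFG : ∀ᶠ z in 𝓝[≠] (0 : ℂ), F z = G z / z ^ k₀) {h : ℂ × ℂ → ℂ} (hh : ContinuousAt h 0)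
    (h0 : h 0 ≠ 0) {v : ℂ → ℂ} (hv : Tendsto (fun u => ((1 : ℂ) / u, v u)) l (𝓝 0))
    (hl : ∀ᶠ u in l, u ≠ 0) :
    ∀ᶠ u in l, F (1 / u * h (1 / u, v u)) =
      u ^ k₀ * (G (1 / u * h (1 / u, v u)) / h (1 / u, v u) ^ k₀) := by
  have hhv : Tendsto (fun u => h (1 / u, v u)) l (𝓝 (h 0)) := hh.tendsto.comp hv
  have hw : Tendsto (fun u => 1 / u * h (1 / u, v u)) l (𝓝[≠] 0) := by
    refine tendsto_nhdsWithin_iff.2 ⟨?_, ?_⟩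
    · simpa using ((continuous_fst.tendsto _).comp hv).mul hhv
    · filter_upwards [hl, hhv.eventually_ne h0] with u hu hhu
      exact mul_ne_zero (one_div_ne_zero hu) hhu
  filter_upwards [hw.eventually hFG, hl, hhv.eventually_ne h0] with u hF hu hhu
  rw [hF, mul_pow, one_div_pow]
  field_simp

theorem stmt_19_general (F : ℂ → ℂ)
    (hF : ∃ (k₀ : ℕ) (G : ℂ → ℂ), AnalyticAt ℂ G 0 ∧
      ∀ᶠ z in nhdsWithin (0 : ℂ) {(0 : ℂ)}ᶜ, F z = G z / z ^ k₀)
    (a : ℂ) (ha : a ≠ 0) (g : ℂ × ℂ → ℂ) (hg : AnalyticAt ℂ g 0) (hg0 : g 0 = 0)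
    (A : ℝ) :
    ∃ L : ℝ, 0 < L ∧ ∃ p ∈ Pspace, ∃ M : ℝ,
      ∀ u : ℂ, u.re < -L →
        ‖F (1 / u * (a + g (1 / u, branchLog u / u))) - p u‖
          ≤ M * ‖u‖ ^ (-A) := by
  obtain ⟨k₀, G, hG, hFG⟩ := hF
  set y : ℂ → ℂ × ℂ := fun u => (1 / u, branchLog u / u)
  have hag : AnalyticAt ℂ (fun q => a + g q) 0 := analyticAt_const.add hg
  have hag0 : a + g 0 ≠ 0 := by simpa [hg0] using ha
  obtain ⟨ps, hps⟩ := analyticAt_comp_fst_mul_div_pow hG hag hag0 k₀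
  set N := 2 * (k₀ + ⌈A⌉₊)
  obtain ⟨p, hp, hpy⟩ := exists_mem_Pspace_eq_pow_mul_partialSum ps k₀ N
  have hu0 : ∀ᶠ u in cobounded ℂ, u ≠ 0 := eventually_ne_cobounded 0
  have hE : (fun u => F (1 / u * (a + g (y u))) - p u) =ᶠ[cobounded ℂ] fun u =>
      u ^ k₀ * (G ((y u).1 * (a + g (y u))) / (a + g (y u)) ^ k₀ - ps.partialSum N (y u)) := by
    filter_upwards [eventually_comp_eq_pow_mul hFG hag.continuousAt hag0
      tendsto_logCoords_cobounded hu0, hu0] with u hF hu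
    rw [hF, hpy u hu, mul_sub]
  have hbound : (fun u => F (1 / u * (a + g (y u))) - p u) =O[cobounded ℂ]
      fun u => ‖u‖ ^ k₀ * (√‖u‖)⁻¹ ^ N :=
    hE.trans_isBigO (((isBigO_norm_right.2 (isBigO_refl _ _)).pow k₀).mul
      ((hps.isBigO_comp_sub_partialSum_pow tendsto_logCoords_cobounded N).trans
        (logCoords_isBigO.norm_left.pow N)))
  obtain ⟨M, hM⟩ := (hbound.trans (isBigO_pow_mul_inv_sqrt_pow k₀ A)).bound
  obtain ⟨L, hL, hLu⟩ := exists_forall_re_lt_of_eventually_cobounded hM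
  exact ⟨L, hL, p, hp, M, fun u hu => (hLu u hu).trans_eq (by rw [norm_of_nonneg (by positivity)])⟩

/-- For `F` meromorphic at `0` and
`w(u) = (1/u)(a + g(1/u, (log u)/u))` with `a ≠ 0`, `g` holomorphic near `(0,0)`,
`g(0,0) = 0`, the composition `F(w(u))` agrees, for any `A > 0`, with an element of
`ℂ[u, 1/u, log u]` up to an error `O(|u|^(−A))` on a left half-plane. -/
theorem stmt_19 (F : ℂ → ℂ)
    (hF : ∃ (k₀ : ℕ) (G : ℂ → ℂ), AnalyticAt ℂ G 0 ∧
      ∀ᶠ z in nhdsWithin (0 : ℂ) {(0 : ℂ)}ᶜ, F z = G z / z ^ k₀)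
    (a : ℂ) (ha : a ≠ 0) (g : ℂ × ℂ → ℂ) (hg : AnalyticAt ℂ g 0) (hg0 : g 0 = 0)
    (A : ℝ) (hA : 0 < A) :
    ∃ L : ℝ, 0 < L ∧ ∃ p ∈ Pspace, ∃ M : ℝ,
      ∀ u : ℂ, u.re < -L →
        ‖F (1 / u * (a + g (1 / u, branchLog u / u))) - p u‖
          ≤ M * ‖u‖ ^ (-A) :=
  stmt_19_general F hF a ha g hg hg0 A
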